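/- Let χ_0, ..., χ_{N-1} be independent complex random variables with ∑_{n=0}^{N-1} E[χ_n] = 0, |χ_n − E[χ_n]| ≤ 1 almost surely for each n, and ∑_{n=0}^{N-1} Var(χ_n) ≤ V for some V > 0. Let χ = ∑_{n=0}^{N-1} χ_n. Then for any 0 < ε ≤ V, P(|χ| ≥ √V + ε) ≤ exp(−ε²/(4V)). -/

import Mathlib

/-! The function `z ↦ 𝔼‖z + S‖` of a sum `S` of independent variables is `1`-Lipschitz, so adding
one more summand `X` with `‖X‖ ≤ 1` moves the conditional mean `Y = 𝔼[‖z + X + S‖ | X]` by at most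
`1` from a constant, with `Var Y ≤ 𝔼‖X‖²`. The bound `eˣ ≤ 1 + x + x²` for `|x| ≤ 1` then gives
`𝔼 e^{tY} ≤ e^{t𝔼Y + t² Var Y}` for `|t| ≤ 1/2`, and integrating out the summands one at a time
(Fubini, via independence) yields `𝔼 e^{t‖S‖} ≤ e^{t𝔼‖S‖ + t² Σ 𝔼‖Xₙ‖²}`. For centred summands
in a real inner product space the cross terms vanish, so `𝔼‖S‖ ≤ √(𝔼‖S‖²) ≤ √V`, and the Chernoff
bound with `t = ε / (2V)` gives the tail estimate. -/

open MeasureTheory ProbabilityTheory Finset Real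

theorem Real.exp_le_one_add_add_sq {x : ℝ} (hx : |x| ≤ 1) : exp x ≤ 1 + x + x ^ 2 := by
  linarith [(abs_le.1 (abs_exp_sub_one_sub_id_le hx)).2]

namespace ProbabilityTheory

variable {Ω : Type*} {mΩ : MeasurableSpace Ω} {μ : Measure Ω}

theorem integrable_exp_mul_of_ae_le [IsFiniteMeasure μ] {Y : Ω → ℝ}
    (hY : AEStronglyMeasurable Y μ) {t C : ℝ} (hC : ∀ᵐ ω ∂μ, t * Y ω ≤ C) :
    Integrable (fun ω => exp (t * Y ω)) μ := by
  refine Integrable.of_bound (continuous_exp.comp_aestronglyMeasurable (hY.const_mul t))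
    (exp C) ?_
  filter_upwards [hC] with ω hω
  rwa [norm_of_nonneg (exp_nonneg _), exp_le_exp]

theorem ae_abs_sub_integral_le_of_ae_abs_sub_le [IsProbabilityMeasure μ] {Y : Ω → ℝ} {c b : ℝ}
    (hY : Integrable Y μ) (h : ∀ᵐ ω ∂μ, |Y ω - c| ≤ b) : ∀ᵐ ω ∂μ, |Y ω - μ[Y]| ≤ 2 * b := by
  have h_mean : |μ[Y] - c| ≤ b := by
    calc |μ[Y] - c| = |∫ ω, (Y ω - c) ∂μ| := by rw [integral_sub hY (integrable_const c)]; simp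
      _ ≤ ∫ ω, |Y ω - c| ∂μ := abs_integral_le_integral_abs
      _ ≤ ∫ _ω, b ∂μ := integral_mono_ae (hY.sub (integrable_const c)).abs (integrable_const b) h
      _ = b := by simp
  filter_upwards [h] with ω hω
  linarith [abs_sub_le (Y ω) c μ[Y], abs_sub_comm c μ[Y]]

theorem mgf_le_exp_mul_integral_add_sq_mul_variance [IsProbabilityMeasure μ] {Y : Ω → ℝ} {t : ℝ}
    (hY : MemLp Y 2 μ) (hbdd : ∀ᵐ ω ∂μ, |t * (Y ω - μ[Y])| ≤ 1) :
    mgf Y μ t ≤ exp (t * μ[Y] + t ^ 2 * Var[Y; μ]) := by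
  set m := μ[Y]
  have hYm : Integrable (fun ω => Y ω - m) μ := hY.integrable one_le_two |>.sub (integrable_const m)
  have hYm_sq : Integrable (fun ω => (Y ω - m) ^ 2) μ := (hY.sub (memLp_const m)).integrable_sq
  have h_exp : Integrable (fun ω => exp (t * Y ω)) μ := by
    refine integrable_exp_mul_of_ae_le hY.1 (C := t * m + 1) ?_
    filter_upwards [hbdd] with ω hω
    linarith [(abs_le.1 hω).2]
  have h_taylor : ∀ᵐ ω ∂μ, exp (t * Y ω)
      ≤ exp (t * m) + exp (t * m) * t * (Y ω - m) + exp (t * m) * t ^ 2 * (Y ω - m) ^ 2 := by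
    filter_upwards [hbdd] with ω hω
    calc exp (t * Y ω) = exp (t * m) * exp (t * (Y ω - m)) := by rw [← exp_add]; ring_nf
      _ ≤ exp (t * m) * (1 + t * (Y ω - m) + (t * (Y ω - m)) ^ 2) := by
          gcongr; exact Real.exp_le_one_add_add_sq hω
      _ = _ := by ring
  have h_centered : ∫ ω, (Y ω - m) ∂μ = 0 := by
    rw [integral_sub (hY.integrable one_le_two) (integrable_const m)]; simp [m]
  calc mgf Y μ t
      ≤ ∫ ω, (exp (t * m) + exp (t * m) * t * (Y ω - m) + exp (t * m) * t ^ 2 * (Y ω - m) ^ 2) ∂μ :=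
        integral_mono_ae h_exp
          (((integrable_const _).add (hYm.const_mul _)).add (hYm_sq.const_mul _)) h_taylor
    _ = exp (t * m) * (1 + t ^ 2 * Var[Y; μ]) := by
        rw [integral_add _ (hYm_sq.const_mul _), integral_add (integrable_const _)
          (hYm.const_mul _), integral_const_mul, integral_const_mul, h_centered,
          variance_eq_integral hY.aemeasurable]
        · simp only [integral_const, probReal_univ, smul_eq_mul, one_mul, mul_zero, add_zero]
          ring
        · exact (integrable_const _).add (hYm.const_mul _)
    _ ≤ exp (t * m) * exp (t ^ 2 * Var[Y; μ]) := by
        gcongr; linarith [add_one_le_exp (t ^ 2 * Var[Y; μ])]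
    _ = exp (t * m + t ^ 2 * Var[Y; μ]) := (exp_add _ _).symm

theorem IndepFun.integral_comp_eq_integral_integral {α β F : Type*} [MeasurableSpace α]
    [MeasurableSpace β] [NormedAddCommGroup F] [NormedSpace ℝ F] [IsFiniteMeasure μ]
    {A : Ω → α} {B : Ω → β} (hAB : IndepFun A B μ) (hA : AEMeasurable A μ)
    (hB : AEMeasurable B μ) {f : α → β → F} (hf : StronglyMeasurable (Function.uncurry f))
    (hint : Integrable (fun ω => f (A ω) (B ω)) μ) :
    ∫ ω, f (A ω) (B ω) ∂μ = ∫ ω, ∫ ω', f (A ω) (B ω') ∂μ ∂μ := by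
  have hAB_map := hAB.map_prod_eq_prod_map_map hA hB
  have hint_prod : Integrable (Function.uncurry f) ((μ.map A).prod (μ.map B)) := by
    rw [← hAB_map, integrable_map_measure hf.aestronglyMeasurable (hA.prodMk hB)]
    exact hint
  calc ∫ ω, f (A ω) (B ω) ∂μ = ∫ p, Function.uncurry f p ∂(μ.map fun ω => (A ω, B ω)) :=
        (integral_map (hA.prodMk hB) hf.aestronglyMeasurable).symm
    _ = ∫ a, ∫ b, f a b ∂μ.map B ∂μ.map A := by rw [hAB_map, integral_prod _ hint_prod]; rfl
    _ = ∫ ω, ∫ ω', f (A ω) (B ω') ∂μ ∂μ := by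
        rw [integral_map (f := fun a => ∫ b, f a b ∂μ.map B) hA
          hf.integral_prod_right'.aestronglyMeasurable]
        congr 1 with ω
        exact integral_map hB (hf.comp_measurable measurable_prodMk_left).aestronglyMeasurable

section NormedGroup

variable {E : Type*} [NormedAddCommGroup E]

theorem lipschitzWith_integral_norm_add [IsProbabilityMeasure μ] {R : Ω → E}
    (hR : Integrable R μ) : LipschitzWith 1 fun z => ∫ ω, ‖z + R ω‖ ∂μ := by
  have hint (z : E) : Integrable (fun ω => ‖z + R ω‖) μ := ((integrable_const z).add hR).norm
  refine LipschitzWith.of_dist_le_mul fun z w => ?_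
  rw [NNReal.coe_one, one_mul, Real.dist_eq, dist_eq_norm, ← integral_sub (hint z) (hint w)]
  calc |∫ ω, (‖z + R ω‖ - ‖w + R ω‖) ∂μ| ≤ ∫ ω, |‖z + R ω‖ - ‖w + R ω‖| ∂μ :=
        abs_integral_le_integral_abs
    _ ≤ ∫ _ω, ‖z - w‖ ∂μ := by
        refine integral_mono ((hint z).sub (hint w)).abs (integrable_const _) fun ω => ?_
        simpa using abs_norm_sub_norm_le (z + R ω) (w + R ω)
    _ = ‖z - w‖ := by simp

theorem LipschitzWith.variance_comp_le_integral_norm_sub_sq [IsProbabilityMeasure μ]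
    {G : E → ℝ} (hG : LipschitzWith 1 G) {X : Ω → E} (hX : MemLp X 2 μ) (x : E) :
    Var[fun ω => G (X ω); μ] ≤ ∫ ω, ‖X ω - x‖ ^ 2 ∂μ := by
  have hGX : AEStronglyMeasurable (fun ω => G (X ω)) μ :=
    hG.continuous.comp_aestronglyMeasurable hX.1
  calc Var[fun ω => G (X ω); μ] = Var[fun ω => G (X ω) - G x; μ] :=
        (variance_sub_const hGX _).symm
    _ ≤ ∫ ω, (G (X ω) - G x) ^ 2 ∂μ :=
        variance_le_expectation_sq (hGX.sub aestronglyMeasurable_const)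
    _ ≤ ∫ ω, ‖X ω - x‖ ^ 2 ∂μ := by
        refine integral_mono_of_nonneg (ae_of_all _ fun ω => sq_nonneg _)
          ((memLp_two_iff_integrable_sq_norm (hX.1.sub aestronglyMeasurable_const)).1
            (hX.sub (memLp_const x)))
          (ae_of_all _ fun ω => ?_)
        have h := pow_le_pow_left₀ dist_nonneg (by simpa using hG.dist_le_mul (X ω) x) 2
        rwa [Real.dist_eq, sq_abs, dist_eq_norm] at h

theorem LipschitzWith.ae_abs_comp_add_sub_le {G : E → ℝ} (hG : LipschitzWith 1 G) {X : Ω → E}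
    (hX1 : ∀ᵐ ω ∂μ, ‖X ω‖ ≤ 1) (z : E) : ∀ᵐ ω ∂μ, |G (z + X ω) - G z| ≤ 1 := by
  filter_upwards [hX1] with ω hω
  have h := hG.dist_le_mul (z + X ω) z
  rw [NNReal.coe_one, one_mul, Real.dist_eq, dist_eq_norm, add_sub_cancel_left] at h
  exact h.trans hω

theorem LipschitzWith.mgf_comp_add_le [IsProbabilityMeasure μ] {G : E → ℝ}
    (hG : LipschitzWith 1 G) {X : Ω → E} (hX : AEStronglyMeasurable X μ)
    (hX1 : ∀ᵐ ω ∂μ, ‖X ω‖ ≤ 1) {t : ℝ} (ht : |t| ≤ 1 / 2) (z : E) :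
    mgf (fun ω => G (z + X ω)) μ t
      ≤ exp (t * ∫ ω, G (z + X ω) ∂μ + t ^ 2 * ∫ ω, ‖X ω‖ ^ 2 ∂μ) := by
  have hzX : MemLp (fun ω => z + X ω) 2 μ := by
    refine .of_bound (aestronglyMeasurable_const.add hX) (‖z‖ + 1) ?_
    filter_upwards [hX1] with ω hω
    linarith [norm_add_le z (X ω)]
  have h_dev := hG.ae_abs_comp_add_sub_le hX1 z
  have hY : MemLp (fun ω => G (z + X ω)) 2 μ := by
    refine .of_bound (hG.continuous.comp_aestronglyMeasurable hzX.1) (|G z| + 1) ?_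
    filter_upwards [h_dev] with ω hω
    rw [Real.norm_eq_abs]
    linarith [abs_sub_abs_le_abs_sub (G (z + X ω)) (G z)]
  have h_var : Var[fun ω => G (z + X ω); μ] ≤ ∫ ω, ‖X ω‖ ^ 2 ∂μ := by
    simpa using hG.variance_comp_le_integral_norm_sub_sq hzX z
  refine (mgf_le_exp_mul_integral_add_sq_mul_variance hY ?_).trans ?_
  · filter_upwards [ae_abs_sub_integral_le_of_ae_abs_sub_le (hY.integrable one_le_two) h_dev]
      with ω hω
    rw [abs_mul]
    nlinarith [abs_nonneg t, abs_nonneg (G (z + X ω) - ∫ ω, G (z + X ω) ∂μ)]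
  · gcongr

variable [MeasurableSpace E] [BorelSpace E] [SecondCountableTopology E]

theorem IndepFun.integral_exp_mul_norm_add_le [IsProbabilityMeasure μ] {X S : Ω → E}
    (hXS : IndepFun X S μ) (hX : AEMeasurable X μ) (hS : Integrable S μ)
    (hX1 : ∀ᵐ ω ∂μ, ‖X ω‖ ≤ 1) {t v : ℝ} (ht : |t| ≤ 1 / 2)
    (hS_exp : ∀ z, ∫ ω, exp (t * ‖z + S ω‖) ∂μ ≤ exp (t * ∫ ω, ‖z + S ω‖ ∂μ + t ^ 2 * v))
    (z : E) :
    ∫ ω, exp (t * ‖z + (X ω + S ω)‖) ∂μ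
      ≤ exp (t * ∫ ω, ‖z + (X ω + S ω)‖ ∂μ + t ^ 2 * (∫ ω, ‖X ω‖ ^ 2 ∂μ + v)) := by
  by_cases h_int : Integrable (fun ω => exp (t * ‖z + (X ω + S ω)‖)) μ
  swap
  · rw [integral_undef h_int]; positivity
  set G : E → ℝ := fun w => ∫ ω, ‖w + S ω‖ ∂μ
  have hG : LipschitzWith 1 G := lipschitzWith_integral_norm_add hS
  -- `G (z + X ω)` is the conditional expectation of `‖z + (X + S)‖` given `X = X ω`
  have hG_mean : ∫ ω, G (z + X ω) ∂μ = ∫ ω, ‖z + (X ω + S ω)‖ ∂μ := by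
    rw [hXS.integral_comp_eq_integral_integral (f := fun x s => ‖z + (x + s)‖) hX
      hS.aemeasurable
      (by fun_prop : Continuous fun p : E × E => ‖z + (p.1 + p.2)‖).stronglyMeasurable
      ((integrable_const z).add ((Integrable.of_bound hX.aestronglyMeasurable 1 hX1).add hS)).norm]
    simp only [G, add_assoc]
  have hG_exp : Integrable (fun ω => exp (t * G (z + X ω))) μ := by
    refine integrable_exp_mul_of_ae_le
      (hG.continuous.comp_aestronglyMeasurable (aestronglyMeasurable_const.add
        hX.aestronglyMeasurable)) (C := t * G z + |t|) ?_
    filter_upwards [hG.ae_abs_comp_add_sub_le hX1 z] with ω hω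
    have h := mul_le_mul_of_nonneg_left hω (abs_nonneg t)
    rw [← abs_mul, mul_one] at h
    show t * G (z + X ω) ≤ _
    linarith [le_abs_self (t * (G (z + X ω) - G z))]
  calc ∫ ω, exp (t * ‖z + (X ω + S ω)‖) ∂μ
      = ∫ ω, ∫ ω', exp (t * ‖(z + X ω) + S ω'‖) ∂μ ∂μ := by
        rw [hXS.integral_comp_eq_integral_integral (f := fun x s => exp (t * ‖z + (x + s)‖)) hX
          hS.aemeasurable
          (by fun_prop : Continuous fun p : E × E => exp (t * ‖z + (p.1 + p.2)‖)).stronglyMeasurable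
          h_int]
        simp only [add_assoc]
    _ ≤ ∫ ω, exp (t ^ 2 * v) * exp (t * G (z + X ω)) ∂μ := by
        refine integral_mono_of_nonneg
          (ae_of_all _ fun ω => integral_nonneg fun _ => (exp_pos _).le) (hG_exp.const_mul _)
          (ae_of_all _ fun ω => ?_)
        dsimp only
        rw [← exp_add, add_comm (t ^ 2 * v)]
        exact hS_exp (z + X ω)
    _ = exp (t ^ 2 * v) * mgf (fun ω => G (z + X ω)) μ t := integral_const_mul _ _
    _ ≤ exp (t ^ 2 * v) * exp (t * ∫ ω, G (z + X ω) ∂μ + t ^ 2 * ∫ ω, ‖X ω‖ ^ 2 ∂μ) := by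
        gcongr; exact hG.mgf_comp_add_le hX.aestronglyMeasurable hX1 ht z
    _ = exp (t * ∫ ω, ‖z + (X ω + S ω)‖ ∂μ + t ^ 2 * (∫ ω, ‖X ω‖ ^ 2 ∂μ + v)) := by
        rw [← exp_add, hG_mean]; ring_nf

theorem iIndepFun.integral_exp_mul_norm_add_sum_le [IsProbabilityMeasure μ] {ι : Type*}
    {X : ι → Ω → E} (hindep : iIndepFun X μ) (hmeas : ∀ i, AEMeasurable (X i) μ)
    (hX1 : ∀ i, ∀ᵐ ω ∂μ, ‖X i ω‖ ≤ 1) {t : ℝ} (ht : |t| ≤ 1 / 2) (s : Finset ι) (z : E) :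
    ∫ ω, exp (t * ‖z + ∑ i ∈ s, X i ω‖) ∂μ
      ≤ exp (t * ∫ ω, ‖z + ∑ i ∈ s, X i ω‖ ∂μ + t ^ 2 * ∑ i ∈ s, ∫ ω, ‖X i ω‖ ^ 2 ∂μ) := by
  classical
  induction s using Finset.induction_on generalizing z with
  | empty => simp
  | insert a s ha ih =>
    have h_indep : IndepFun (X a) (fun ω => ∑ i ∈ s, X i ω) μ := by
      simpa [Finset.sum_fn] using (hindep.indepFun_finsetSum_of_notMem₀ hmeas ha).symm
    simp_rw [Finset.sum_insert ha]
    exact h_indep.integral_exp_mul_norm_add_le (hmeas a)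
      (integrable_finsetSum s fun i _ => .of_bound (hmeas i).aestronglyMeasurable 1 (hX1 i))
      (hX1 a) ht ih z

end NormedGroup

section InnerProductSpace

variable {E : Type*} [NormedAddCommGroup E] [InnerProductSpace ℝ E] [CompleteSpace E]
  [MeasurableSpace E] [BorelSpace E]

theorem IndepFun.integral_norm_add_sq [IsFiniteMeasure μ] {X Y : Ω → E}
    (hXY : IndepFun X Y μ) (hX : MemLp X 2 μ) (hY : MemLp Y 2 μ) (hX0 : μ[X] = 0) :
    ∫ ω, ‖X ω + Y ω‖ ^ 2 ∂μ = ∫ ω, ‖X ω‖ ^ 2 ∂μ + ∫ ω, ‖Y ω‖ ^ 2 ∂μ := by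
  have hX1 := hX.integrable one_le_two
  have hY1 := hY.integrable one_le_two
  have hXX := (memLp_two_iff_integrable_sq_norm hX.1).1 hX
  have hYY := (memLp_two_iff_integrable_sq_norm hY.1).1 hY
  have h_inner : Integrable (fun ω => inner ℝ (X ω) (Y ω)) μ :=
    hXY.integrable_bilin hX1 hY1 (innerSL ℝ)
  have h_inner_zero : ∫ ω, inner ℝ (X ω) (Y ω) ∂μ = 0 :=
    (hXY.integral_bilin hX1 hY1 (innerSL ℝ)).trans (by simp [hX0])
  simp_rw [norm_add_sq_real]
  rw [integral_add (by exact hXX.add (h_inner.const_mul 2)) hYY,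
    integral_add hXX (by exact h_inner.const_mul 2), integral_const_mul, h_inner_zero, mul_zero,
    add_zero]

variable [SecondCountableTopology E]

theorem iIndepFun.integral_norm_sum_sq [IsFiniteMeasure μ]
    {ι : Type*} {X : ι → Ω → E} (hindep : iIndepFun X μ) (hL2 : ∀ i, MemLp (X i) 2 μ)
    (hmean : ∀ i, μ[X i] = 0) (s : Finset ι) :
    ∫ ω, ‖∑ i ∈ s, X i ω‖ ^ 2 ∂μ = ∑ i ∈ s, ∫ ω, ‖X i ω‖ ^ 2 ∂μ := by
  classical
  induction s using Finset.induction_on with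
  | empty => simp
  | insert a s ha ih =>
    have h_indep : IndepFun (X a) (fun ω => ∑ i ∈ s, X i ω) μ := by
      simpa [Finset.sum_fn] using
        (hindep.indepFun_finsetSum_of_notMem₀ (fun i => (hL2 i).aemeasurable) ha).symm
    simp_rw [Finset.sum_insert ha]
    rw [h_indep.integral_norm_add_sq (hL2 a) (memLp_finsetSum s fun i _ => hL2 i) (hmean a), ih]

theorem iIndepFun.integral_norm_sum_le_sqrt [IsProbabilityMeasure μ] {ι : Type*} {X : ι → Ω → E}
    (hindep : iIndepFun X μ) (hL2 : ∀ i, MemLp (X i) 2 μ) (hmean : ∀ i, μ[X i] = 0)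
    (s : Finset ι) :
    ∫ ω, ‖∑ i ∈ s, X i ω‖ ∂μ ≤ √(∑ i ∈ s, ∫ ω, ‖X i ω‖ ^ 2 ∂μ) := by
  have hS : MemLp (fun ω => ‖∑ i ∈ s, X i ω‖) 2 μ := (memLp_finsetSum s fun i _ => hL2 i).norm
  have h_var := variance_nonneg (fun ω => ‖∑ i ∈ s, X i ω‖) μ
  rw [variance_eq_sub hS] at h_var
  rw [← hindep.integral_norm_sum_sq hL2 hmean s]
  exact Real.le_sqrt_of_sq_le (by simpa using h_var)

theorem iIndepFun.measure_sqrt_add_le_norm_sum_le [IsProbabilityMeasure μ] {ι : Type*}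
    {X : ι → Ω → E}
    (hindep : iIndepFun X μ) (hmeas : ∀ i, AEMeasurable (X i) μ) (hmean : ∀ i, μ[X i] = 0)
    (hX1 : ∀ i, ∀ᵐ ω ∂μ, ‖X i ω‖ ≤ 1) (s : Finset ι) {V ε : ℝ} (hV : 0 < V)
    (hvar : ∑ i ∈ s, ∫ ω, ‖X i ω‖ ^ 2 ∂μ ≤ V) (hε : 0 ≤ ε) (hεV : ε ≤ V) :
    μ {ω | √V + ε ≤ ‖∑ i ∈ s, X i ω‖} ≤ ENNReal.ofReal (exp (-ε ^ 2 / (4 * V))) := by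
  set t := ε / (2 * V)
  have ht0 : 0 ≤ t := by positivity
  have ht : |t| ≤ 1 / 2 := by
    rw [abs_of_nonneg ht0, div_le_iff₀ (by positivity)]; linarith
  have h_mean : ∫ ω, ‖∑ i ∈ s, X i ω‖ ∂μ ≤ √V :=
    (hindep.integral_norm_sum_le_sqrt (fun i => .of_bound (hmeas i).aestronglyMeasurable 1 (hX1 i))
      hmean s).trans (Real.sqrt_le_sqrt hvar)
  have h_mgf : mgf (fun ω => ‖∑ i ∈ s, X i ω‖) μ t ≤ exp (t * √V + t ^ 2 * V) := by
    have h := hindep.integral_exp_mul_norm_add_sum_le hmeas hX1 ht s 0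
    simp only [zero_add] at h
    refine h.trans (exp_le_exp.2 (add_le_add ?_ ?_)) <;> gcongr
  have h_bdd : ∀ᵐ ω ∂μ, ‖∑ i ∈ s, X i ω‖ ≤ #s := by
    filter_upwards [(Filter.eventually_all_finset s).2 fun i _ => hX1 i] with ω hω
    exact (norm_sum_le _ _).trans ((Finset.sum_le_sum hω).trans_eq (by simp))
  have h_int : Integrable (fun ω => exp (t * ‖∑ i ∈ s, X i ω‖)) μ := by
    refine integrable_exp_mul_of_ae_le (by fun_prop) (C := t * #s) ?_
    filter_upwards [h_bdd] with ω hω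
    gcongr
  rw [ENNReal.le_ofReal_iff_toReal_le (measure_ne_top _ _) (exp_nonneg _), ← measureReal_def]
  calc μ.real {ω | √V + ε ≤ ‖∑ i ∈ s, X i ω‖}
      ≤ exp (-t * (√V + ε)) * mgf (fun ω => ‖∑ i ∈ s, X i ω‖) μ t :=
        measure_ge_le_exp_mul_mgf _ ht0 h_int
    _ ≤ exp (-t * (√V + ε)) * exp (t * √V + t ^ 2 * V) := by gcongr
    _ = exp (-ε ^ 2 / (4 * V)) := by
        rw [← exp_add]; congr 1; simp only [t]; field_simp; ring

end InnerProductSpace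

end ProbabilityTheory

theorem stmt_7_general {Ω : Type*} [MeasureSpace Ω]
    [IsProbabilityMeasure (volume : Measure Ω)]
    (N : ℕ) (χ : Fin N → Ω → ℂ)
    (hInt : ∀ n, Integrable (χ n))
    (hIndep : iIndepFun χ volume)
    (hmean : (∑ n : Fin N, ∫ ω, χ n ω) = 0)
    (hbdd : ∀ n, ∀ᵐ ω ∂(volume : Measure Ω),
      ‖χ n ω - ∫ ω', χ n ω'‖ ≤ 1)
    (V : ℝ) (hV : 0 < V)
    (hvar : (∑ n : Fin N, ∫ ω, ‖χ n ω - ∫ ω', χ n ω'‖ ^ 2) ≤ V)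
    (ε : ℝ) (hε : 0 < ε) (hεV : ε ≤ V) :
    volume {ω | Real.sqrt V + ε ≤ ‖∑ n : Fin N, χ n ω‖}
      ≤ ENNReal.ofReal (Real.exp (-ε ^ 2 / (4 * V))) := by
  have h_centered (ω : Ω) : ∑ n, χ n ω = ∑ n, (χ n ω - ∫ ω', χ n ω') := by
    rw [Finset.sum_sub_distrib, hmean, sub_zero]
  simp_rw [h_centered]
  exact iIndepFun.measure_sqrt_add_le_norm_sum_le
    (hIndep.comp _ fun n => measurable_id.sub_const _)
    (fun n => ((hInt n).sub (integrable_const _)).aemeasurable)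
    (fun n => by simp [integral_sub (hInt n) (integrable_const _)]) hbdd univ hV hvar hε.le hεV

/-- Corollary 1: Bernstein-type tail bound for a sum of independent bounded
complex random variables. -/
theorem stmt_7 {Ω : Type*} [MeasureSpace Ω]
    [IsProbabilityMeasure (volume : Measure Ω)]
    (N : ℕ) (χ : Fin N → Ω → ℂ)
    (hmeas : ∀ n, Measurable (χ n))
    (hInt : ∀ n, Integrable (χ n))
    (hIndep : iIndepFun χ volume)
    (hmean : (∑ n : Fin N, ∫ ω, χ n ω) = 0)
    (hbdd : ∀ n, ∀ᵐ ω ∂(volume : Measure Ω),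
      ‖χ n ω - ∫ ω', χ n ω'‖ ≤ 1)
    (V : ℝ) (hV : 0 < V)
    (hvar : (∑ n : Fin N, ∫ ω, ‖χ n ω - ∫ ω', χ n ω'‖ ^ 2) ≤ V)
    (ε : ℝ) (hε : 0 < ε) (hεV : ε ≤ V) :
    volume {ω | Real.sqrt V + ε ≤ ‖∑ n : Fin N, χ n ω‖}
      ≤ ENNReal.ofReal (Real.exp (-ε ^ 2 / (4 * V))) :=
  stmt_7_general N χ hInt hIndep hmean hbdd V hV hvar ε hε hεV
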